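/- For every α ∈ (0,1), the function λ(θ) = θ^α · sin(θ/2 + απ/2) / sin(θ/2) is strictly decreasing on the interval ((1−α)π, π). -/

import Mathlib

open Real Set

/-!
With `c = απ/2`, the derivative of `λ` at `θ` is
`θ^(α-1) (α (cos c - cos (θ + c)) - θ sin c) / (2 sin² (θ/2))`, so it suffices that
`G θ = θ sin c - α (cos c - cos (θ + c))` is positive on `((1-α)π, π)`. There
`G' θ = sin c - α sin (θ + c) > 0`, since `θ + c` lies within `c` of `π`; and
`G ((1-α)π) = (1-α)π sin c - 2α cos c`, whose positivity is `4c cos c < (π - 2c)π sin c`.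
Putting `u = π/2 - c`, this says `cot u - 1/u > cot (π/2) - 2/π`, which holds because
`cot u - 1/u` has derivative `1/u² - 1/sin² u < 0` on `(0, π)`.
-/

lemma strictAntiOn_Ioo_of_hasDerivAt_neg {f f' : ℝ → ℝ} {a b : ℝ}
    (hf : ∀ x ∈ Ioo a b, HasDerivAt f (f' x) x) (hf' : ∀ x ∈ Ioo a b, f' x < 0) :
    StrictAntiOn f (Ioo a b) :=
  strictAntiOn_of_hasDerivWithinAt_neg (convex_Ioo a b)
    (fun x hx => (hf x hx).continuousAt.continuousWithinAt)
    (by simpa only [interior_Ioo] using fun x hx => (hf x hx).hasDerivWithinAt)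
    (by simpa only [interior_Ioo] using hf')

lemma strictAntiOn_cos_div_sin_sub_inv :
    StrictAntiOn (fun x => cos x / sin x - x⁻¹) (Ioo 0 π) := by
  refine strictAntiOn_Ioo_of_hasDerivAt_neg (f' := fun x => (x ^ 2)⁻¹ - (sin x ^ 2)⁻¹)
    (fun x ⟨hx0, hxπ⟩ => ?_) fun x ⟨hx0, hxπ⟩ => ?_
  · have hsin : sin x ≠ 0 := (sin_pos_of_pos_of_lt_pi hx0 hxπ).ne'
    refine (((hasDerivAt_cos x).div (hasDerivAt_sin x) hsin).sub
      (hasDerivAt_inv hx0.ne')).congr_deriv ?_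
    field_simp
    linear_combination -x ^ 2 * sin_sq_add_cos_sq x
  · have hsin : 0 < sin x := sin_pos_of_pos_of_lt_pi hx0 hxπ
    exact sub_neg.2 (inv_strictAnti₀ (by positivity) (sin_sq_lt_sq hx0.ne'))

lemma four_mul_mul_cos_lt_mul_sin {s : ℝ} (hs : 0 < s) (hs' : s < π / 2) :
    4 * s * cos s < (π - 2 * s) * π * sin s := by
  have h := strictAntiOn_cos_div_sin_sub_inv (a := π / 2 - s) (b := π / 2)
    ⟨by linarith, by linarith⟩ ⟨by positivity, by linarith [pi_pos]⟩ (by linarith)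
  simp only [sin_pi_div_two_sub, cos_pi_div_two_sub, cos_pi_div_two, sin_pi_div_two] at h
  have hcos : 0 < cos s := cos_pos_of_mem_Ioo ⟨by linarith, hs'⟩
  have hu : 0 < π - 2 * s := by linarith
  have hinv : (π / 2 - s)⁻¹ - (π / 2)⁻¹ = 4 * s / ((π - 2 * s) * π) := by
    field_simp; ring
  rw [zero_div, zero_sub, neg_lt_sub_iff_lt_add, ← sub_lt_iff_lt_add', hinv, lt_div_iff₀ hcos,
    div_mul_eq_mul_div, div_lt_iff₀ (by positivity)] at h
  linarith

lemma sin_add_lt_sin {c x : ℝ} (hc : c ≤ π / 2) (hx : x ∈ Ioo (π - 2 * c) π) :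
    sin (x + c) < sin c := by
  rw [← sin_pi_sub]
  exact strictMonoOn_sin ⟨by linarith [hx.2], by linarith [hx.1]⟩ ⟨by linarith [hx.1, hx.2], hc⟩
    (by linarith [hx.1])

lemma mul_cos_sub_cos_lt_mul_sin {α θ : ℝ} (hα : α ∈ Ioo 0 1) (hθ : θ ∈ Ioo ((1 - α) * π) π) :
    α * (cos (α * π / 2) - cos (θ + α * π / 2)) < θ * sin (α * π / 2) := by
  obtain ⟨hα0, hα1⟩ := hα
  set c := α * π / 2 with hc
  have hc0 : 0 < c := by positivity
  have hcπ : c < π / 2 := by rw [hc]; nlinarith [pi_pos]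
  have hsinc : 0 < sin c := sin_pos_of_pos_of_lt_pi hc0 (by linarith)
  rw [show (1 - α) * π = π - 2 * c by rw [hc]; ring] at hθ
  set G : ℝ → ℝ := fun x => x * sin c - α * (cos c - cos (x + c)) with hG
  have hderiv : ∀ x, HasDerivAt G (sin c - α * sin (x + c)) x := fun x =>
    (((hasDerivAt_id' x).mul_const (sin c)).sub ((((hasDerivAt_id' x).add_const c).cos.const_sub
      (cos c)).const_mul α)).congr_deriv (by ring)
  have hmono : StrictMonoOn G (Icc (π - 2 * c) π) :=
    strictMonoOn_of_hasDerivWithinAt_pos (convex_Icc _ _)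
      (fun x _ => (hderiv x).continuousAt.continuousWithinAt)
      (fun x _ => (hderiv x).hasDerivWithinAt) fun x hx => by
        rw [interior_Icc] at hx
        refine sub_pos.2 ?_
        calc α * sin (x + c) < α * sin c := mul_lt_mul_of_pos_left (sin_add_lt_sin hcπ.le hx) hα0
          _ < sin c := mul_lt_of_lt_one_left hsinc hα1
  have hG_pos : 0 < G (π - 2 * c) := by
    have h := four_mul_mul_cos_lt_mul_sin hc0 hcπ
    have hα_eq : α = 2 * c / π := by rw [hc]; field_simp
    simp only [hG, show π - 2 * c + c = π - c by ring, cos_pi_sub, hα_eq]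
    rw [← mul_pos_iff_of_pos_left pi_pos]
    field_simp
    linarith
  have := hmono ⟨le_rfl, by linarith⟩ ⟨hθ.1.le, hθ.2.le⟩ hθ.1
  simp only [hG] at this
  linarith

lemma hasDerivAt_rpow_mul_sin_add_div_sin {α c θ : ℝ} (hθ : 0 < θ) (hsin : sin (θ / 2) ≠ 0) :
    HasDerivAt (fun x => x ^ α * sin (x / 2 + c) / sin (x / 2))
      (θ ^ (α - 1) * (α * (cos c - cos (θ + c)) - θ * sin c) / (2 * sin (θ / 2) ^ 2)) θ := by
  have hhalf : HasDerivAt (fun x : ℝ => x / 2) (1 / 2) θ := (hasDerivAt_id θ).div_const 2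
  refine (((hasDerivAt_rpow_const (p := α) (Or.inl hθ.ne')).mul (hhalf.add_const c).sin).div
    hhalf.sin hsin).congr_deriv ?_
  have hpow : θ ^ α = θ ^ (α - 1) * θ := by
    rw [← rpow_add_one hθ.ne', sub_add_cancel]
  have hsin_c : sin c = sin (θ / 2 + c) * cos (θ / 2) - cos (θ / 2 + c) * sin (θ / 2) := by
    rw [← sin_sub, add_sub_cancel_left]
  have hcos_c : cos c - cos (θ + c) = 2 * sin (θ / 2 + c) * sin (θ / 2) := by
    have hsub := cos_sub (θ / 2 + c) (θ / 2)
    have hadd := cos_add (θ / 2 + c) (θ / 2)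
    rw [add_sub_cancel_left] at hsub
    rw [show θ / 2 + c + θ / 2 = θ + c by ring] at hadd
    linarith
  simp only [Pi.mul_apply]
  rw [hpow, hcos_c, hsin_c]
  field_simp
  ring

theorem gl_lambda_strictAntiOn (α : ℝ) (hα : α ∈ Set.Ioo (0:ℝ) 1) :
    StrictAntiOn (fun θ : ℝ => θ ^ α * Real.sin (θ / 2 + α * π / 2) / Real.sin (θ / 2))
      (Set.Ioo ((1 - α) * π) π) := by
  have hpos : ∀ θ ∈ Ioo ((1 - α) * π) π, 0 < θ ∧ 0 < sin (θ / 2) := fun θ hθ => by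
    have hθ0 : 0 < θ := lt_trans (mul_pos (by linarith [hα.2]) pi_pos) hθ.1
    exact ⟨hθ0, sin_pos_of_pos_of_lt_pi (by positivity) (by linarith [hθ.2])⟩
  refine strictAntiOn_Ioo_of_hasDerivAt_neg
    (fun θ hθ => hasDerivAt_rpow_mul_sin_add_div_sin (hpos θ hθ).1 (hpos θ hθ).2.ne')
    fun θ hθ => div_neg_of_neg_of_pos ?_ (by have := (hpos θ hθ).2; positivity)
  exact mul_neg_of_pos_of_neg (rpow_pos_of_pos (hpos θ hθ).1 _)
    (sub_neg.2 (mul_cos_sub_cos_lt_mul_sin hα hθ))
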